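/- For any partition κ, 2^{2|κ|} times the product (h_κ d'_κ) evaluated at α=1/2 equals d'_{κ²} evaluated at α=1, where κ² is the partition obtained by repeating each part of κ twice. Equivalently, 2^{2|κ|} (h_κ d'_κ)|_{α=1/2} = d_{κ²}|_{α=1}. -/

import Mathlib

/-- Arm length of a cell in a Young diagram. -/
def armLength (μ : YoungDiagram) (c : ℕ × ℕ) : ℕ :=
  (μ.cells.filter fun d => d.1 = c.1 ∧ c.2 < d.2).card

/-- Leg length of a cell in a Young diagram. -/
def legLength (μ : YoungDiagram) (c : ℕ × ℕ) : ℕ :=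
  (μ.cells.filter fun d => d.2 = c.2 ∧ c.1 < d.1).card

/-- d'_κ(α) = ∏_{(i,j)∈κ} (α(a(i,j)+1) + l(i,j)). -/
noncomputable def dPrime (α : ℚ) (μ : YoungDiagram) : ℚ :=
  ∏ c ∈ μ.cells, (α * (armLength μ c + 1) + legLength μ c)

/-- h_κ(α) = ∏_{(i,j)∈κ} (α a(i,j) + l(i,j) + 1). -/
noncomputable def hProd (α : ℚ) (μ : YoungDiagram) : ℚ :=
  ∏ c ∈ μ.cells, (α * armLength μ c + legLength μ c + 1)

/-!
Doubling every row of `κ` keeps the arm length of each cell `(i, j)` and turns its leg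
length `l` into `2l + 1` on row `2i` and `2l` on row `2i + 1`. Writing `a` for the arm
length, the two cells of `κ²` coming from `(i, j)` contribute `(a + 2l + 2)(a + 2l + 1)` to
`d'_{κ²}(1)`, which is exactly `4 (a/2 + l + 1)((a + 1)/2 + l)`, the contribution of `(i, j)`
to `4 h_κ(1/2) d'_κ(1/2)`.
-/

open Finset

namespace YoungDiagram

theorem armLength_eq_rowLen_sub (μ : YoungDiagram) (i j : ℕ) :
    armLength μ (i, j) = μ.rowLen i - (j + 1) := by
  have hrow : (μ.cells.filter fun d => d.1 = i ∧ j < d.2) =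
      {i} ×ˢ Ico (j + 1) (μ.rowLen i) := by
    ext ⟨r, k⟩
    simp only [mem_filter, mem_cells, mem_product, mem_singleton, mem_Ico, mem_iff_lt_rowLen]
    constructor
    · rintro ⟨hk, rfl, hjk⟩
      exact ⟨rfl, hjk, hk⟩
    · rintro ⟨rfl, hjk, hk⟩
      exact ⟨hk, rfl, hjk⟩
  rw [armLength, hrow, card_product, card_singleton, Nat.card_Ico, one_mul]

theorem legLength_eq_colLen_sub (μ : YoungDiagram) (i j : ℕ) :
    legLength μ (i, j) = μ.colLen j - (i + 1) := by
  have hcol : (μ.cells.filter fun d => d.2 = j ∧ i < d.1) =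
      Ico (i + 1) (μ.colLen j) ×ˢ {j} := by
    ext ⟨r, k⟩
    simp only [mem_filter, mem_cells, mem_product, mem_singleton, mem_Ico, mem_iff_lt_colLen]
    constructor
    · rintro ⟨hr, rfl, hir⟩
      exact ⟨⟨hir, hr⟩, rfl⟩
    · rintro ⟨⟨hir, hr⟩, rfl⟩
      exact ⟨hr, rfl, hir⟩
  rw [legLength, hcol, card_product, card_singleton, Nat.card_Ico, mul_one]

section RowDoubling

variable {μ ν : YoungDiagram} (hν : ∀ i j : ℕ, (i, j) ∈ ν ↔ j < μ.rowLen (i / 2))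
include hν

theorem rowLen_of_rowDoubling (r : ℕ) : ν.rowLen r = μ.rowLen (r / 2) :=
  eq_of_forall_lt_iff fun j => mem_iff_lt_rowLen.symm.trans (hν r j)

theorem colLen_of_rowDoubling (j : ℕ) : ν.colLen j = 2 * μ.colLen j :=
  eq_of_forall_lt_iff fun r => by
    rw [← mem_iff_lt_colLen, hν, ← mem_iff_lt_rowLen, mem_iff_lt_colLen]
    omega

theorem armLength_of_rowDoubling (r j : ℕ) : armLength ν (r, j) = armLength μ (r / 2, j) := by
  rw [armLength_eq_rowLen_sub, armLength_eq_rowLen_sub, rowLen_of_rowDoubling hν]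

theorem legLength_even_of_rowDoubling {i j : ℕ} (hij : (i, j) ∈ μ) :
    legLength ν (2 * i, j) = 2 * legLength μ (i, j) + 1 := by
  have := mem_iff_lt_colLen.mp hij
  rw [legLength_eq_colLen_sub, legLength_eq_colLen_sub, colLen_of_rowDoubling hν]
  omega

theorem legLength_odd_of_rowDoubling (i j : ℕ) :
    legLength ν (2 * i + 1, j) = 2 * legLength μ (i, j) := by
  rw [legLength_eq_colLen_sub, legLength_eq_colLen_sub, colLen_of_rowDoubling hν]
  omega

theorem cells_eq_of_rowDoubling : ν.cells =
    μ.cells.image (fun c => (2 * c.1, c.2)) ∪ μ.cells.image (fun c => (2 * c.1 + 1, c.2)) := by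
  ext ⟨r, j⟩
  simp only [mem_union, mem_image, mem_cells, Prod.mk.injEq, Prod.exists, hν r j,
    ← mem_iff_lt_rowLen]
  constructor
  · intro h
    rcases Nat.even_or_odd' r with ⟨i, rfl | rfl⟩
    · exact Or.inl ⟨i, j, by rwa [Nat.mul_div_cancel_left i two_pos] at h, rfl, rfl⟩
    · exact Or.inr ⟨i, j, by rwa [show (2 * i + 1) / 2 = i by omega] at h, rfl, rfl⟩
  · rintro (⟨i, _, h, rfl, rfl⟩ | ⟨i, _, h, rfl, rfl⟩)
    · rwa [Nat.mul_div_cancel_left i two_pos]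
    · rwa [show (2 * i + 1) / 2 = i by omega]

theorem prod_cells_of_rowDoubling {M : Type*} [CommMonoid M] (f : ℕ × ℕ → M) :
    ∏ c ∈ ν.cells, f c = ∏ c ∈ μ.cells, f (2 * c.1, c.2) * f (2 * c.1 + 1, c.2) := by
  have hdisj : Disjoint (μ.cells.image fun c => (2 * c.1, c.2))
      (μ.cells.image fun c => (2 * c.1 + 1, c.2)) := by
    simp only [disjoint_left, mem_image, Prod.exists]
    rintro _ ⟨a, b, _, rfl⟩ ⟨a', b', _, h⟩
    simp only [Prod.mk.injEq] at h
    omega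
  rw [cells_eq_of_rowDoubling hν, prod_union hdisj, prod_image fun a _ b _ h => ?_,
    prod_image fun a _ b _ h => ?_, prod_mul_distrib]
  all_goals
    simp only [Prod.mk.injEq] at h
    exact Prod.ext (by omega) h.2

end RowDoubling

end YoungDiagram

open YoungDiagram in
/-- 2^{2|κ|} (h_κ d'_κ)|_{α=1/2} = d_{κ²}|_{α=1}, where κ² repeats each part of κ twice. -/
theorem hd_alpha_half_eq_d_squared (μ ν : YoungDiagram)
    (hν : ∀ i j : ℕ, (i, j) ∈ ν ↔ j < μ.rowLen (i / 2)) :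
    (2 : ℚ) ^ (2 * μ.card) * (hProd (1/2) μ * dPrime (1/2) μ) = dPrime 1 ν := by
  rw [hProd, dPrime, dPrime, prod_cells_of_rowDoubling hν, pow_mul, YoungDiagram.card,
    ← prod_const, ← prod_mul_distrib, ← prod_mul_distrib]
  refine prod_congr rfl ?_
  rintro ⟨i, j⟩ hij
  rw [armLength_of_rowDoubling hν, armLength_of_rowDoubling hν,
    legLength_even_of_rowDoubling hν hij, legLength_odd_of_rowDoubling hν,
    Nat.mul_div_cancel_left i two_pos, show (2 * i + 1) / 2 = i by omega]
  push_cast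
  ring
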